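/- arXiv:1510.00152 — 2 statements merged into one kernel-verified Lean document; each statement's English description precedes it below -/
import Mathlib

section
/- Let γ : ℝ → ℝ³ be a twice continuously differentiable curve with ‖γ(t)‖ = 1 for all t, satisfying the magnetic geodesic equation of the round two-sphere with magnetic form equal to the Riemannian area form, namely γ''(t) = −‖γ'(t)‖²·γ(t) + γ'(t) × γ(t) for all t ∈ ℝ (where × is the cross product in ℝ³). Then the vector w(t) := γ(t) × γ'(t) − γ(t) is independent of t, and for this constant vector w one has ⟨γ(t), w⟩ = −1 for all t ∈ ℝ. In particular, w ≠ 0 and the image of γ is contained in the intersection of the unit sphere S² with an affine plane in ℝ³ not passing through the origin. -/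
/-! The Lorentz force `γ' × γ` contributes `γ × (γ' × γ) = γ'` to the derivative of `γ × γ'`
(using `‖γ‖ = 1` and `γ ⊥ γ'`), which exactly cancels the derivative of `-γ`; so
`w = γ × γ' - γ` is constant. Since `γ ⊥ γ × γ'`, the plane equation `⟨γ, w⟩ = -‖γ‖² = -1`
then holds at every time, which also forces `w ≠ 0`. -/

noncomputable section

/-- Componentwise derivative of a curve in `ℝ³`. -/
def vd (γ : ℝ → Fin 3 → ℝ) (t : ℝ) : Fin 3 → ℝ := fun i => deriv (fun u => γ u i) t

/-- Euclidean inner product on `ℝ³`. -/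
def ip (x y : Fin 3 → ℝ) : ℝ := ∑ i, x i * y i

open Matrix

theorem ip_eq_dotProduct (x y : Fin 3 → ℝ) : ip x y = x ⬝ᵥ y := rfl

theorem cross_smul_add_cross_eq_of_dotProduct {x v : Fin 3 → ℝ} (hx : x ⬝ᵥ x = 1)
    (hxv : x ⬝ᵥ v = 0) (c : ℝ) : x ⨯₃ (c • x + v ⨯₃ x) = v := by
  rw [map_add, map_smul, cross_self, smul_zero, zero_add, cross_cross_eq_smul_sub_smul', hx,
    dotProduct_comm, hxv, one_smul, zero_smul, sub_zero]

theorem dotProduct_cross_sub_self (x v : Fin 3 → ℝ) : x ⬝ᵥ (x ⨯₃ v - x) = -(x ⬝ᵥ x) := by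
  rw [dotProduct_sub, dot_self_cross, zero_sub]

section Calculus

variable {γ u v : ℝ → Fin 3 → ℝ} {γ' u' v' : Fin 3 → ℝ} {t : ℝ}

theorem HasDerivAt.crossProduct (hu : HasDerivAt u u' t) (hv : HasDerivAt v v' t) :
    HasDerivAt (fun s => u s ⨯₃ v s) (u t ⨯₃ v' + u' ⨯₃ v t) t :=
  (_root_.crossProduct : (Fin 3 → ℝ) →ₗ[ℝ] _ →ₗ[ℝ] _).toContinuousBilinearMap.hasDerivAt_of_bilinear
    (fun _ => hu) (fun _ => hv)

theorem HasDerivAt.dotProduct (hu : HasDerivAt u u' t) (hv : HasDerivAt v v' t) :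
    HasDerivAt (fun s => u s ⬝ᵥ v s) (u t ⬝ᵥ v' + u' ⬝ᵥ v t) t :=
  (dotProductBilin ℝ ℝ : (Fin 3 → ℝ) →ₗ[ℝ] _ →ₗ[ℝ] ℝ).toContinuousBilinearMap.hasDerivAt_of_bilinear
    (fun _ => hu) (fun _ => hv)

theorem dotProduct_eq_zero_of_dotProduct_self_const {c : ℝ} (hc : ∀ s, γ s ⬝ᵥ γ s = c)
    (h : HasDerivAt γ γ' t) : γ t ⬝ᵥ γ' = 0 := by
  have h2 := (h.dotProduct h).unique (by simpa only [hc] using hasDerivAt_const t c)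
  rw [dotProduct_comm γ'] at h2
  linarith

theorem hasDerivAt_vd (h : DifferentiableAt ℝ γ t) : HasDerivAt γ (vd γ t) t :=
  hasDerivAt_pi.2 fun i => (differentiableAt_pi.1 h i).hasDerivAt

theorem ContDiff.differentiable_vd (h : ContDiff ℝ 2 γ) : Differentiable ℝ (vd γ) := by
  have hvd : vd γ = deriv γ :=
    funext fun t => (hasDerivAt_vd (h.differentiable two_ne_zero t)).deriv.symm
  rw [hvd]
  exact (contDiff_succ_iff_deriv.1 (h : ContDiff ℝ (1 + 1) γ)).2.2.differentiable one_ne_zero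

end Calculus

def magneticInvariant (γ : ℝ → Fin 3 → ℝ) (t : ℝ) : Fin 3 → ℝ := γ t ⨯₃ vd γ t - γ t

theorem hasDerivAt_magneticInvariant {γ : ℝ → Fin 3 → ℝ} {t c : ℝ} (hγ : Differentiable ℝ γ)
    (hv : DifferentiableAt ℝ (vd γ) t) (hsphere : ∀ s, γ s ⬝ᵥ γ s = 1)
    (hacc : vd (vd γ) t = c • γ t + vd γ t ⨯₃ γ t) :
    HasDerivAt (magneticInvariant γ) 0 t := by
  have hγ' := hasDerivAt_vd (hγ t)
  have horth := dotProduct_eq_zero_of_dotProduct_self_const hsphere hγ'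
  have h := (hγ'.crossProduct (hasDerivAt_vd hv)).sub hγ'
  rwa [hacc, cross_self, add_zero, cross_smul_add_cross_eq_of_dotProduct (hsphere t) horth,
    sub_self] at h

/-- A magnetic geodesic on the round two-sphere with magnetic form the area form:
the vector `w = γ × γ' - γ` is a constant of motion, `⟨γ, w⟩ = -1`, and `w ≠ 0`;
hence the curve lies on the intersection of `S²` with an affine plane not through
the origin. -/
theorem sphere_magnetic_geodesic_planar
    (γ : ℝ → Fin 3 → ℝ) (hγ : ContDiff ℝ 2 γ)
    (hsphere : ∀ t : ℝ, ip (γ t) (γ t) = 1)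
    (heq : ∀ t : ℝ,
      (fun i => deriv (fun s => vd γ s i) t) =
        -(ip (vd γ t) (vd γ t)) • γ t + crossProduct (vd γ t) (γ t)) :
    (∀ t s : ℝ,
        crossProduct (γ t) (vd γ t) - γ t = crossProduct (γ s) (vd γ s) - γ s) ∧
    (∀ t : ℝ, ip (γ t) (crossProduct (γ 0) (vd γ 0) - γ 0) = -1) ∧
    crossProduct (γ 0) (vd γ 0) - γ 0 ≠ 0 := by
  have hderiv : ∀ t, HasDerivAt (magneticInvariant γ) 0 t := fun t =>
    hasDerivAt_magneticInvariant (hγ.differentiable two_ne_zero) (hγ.differentiable_vd t)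
      hsphere (heq t)
  have hconst : ∀ t s, magneticInvariant γ t = magneticInvariant γ s :=
    is_const_of_deriv_eq_zero (fun t => (hderiv t).differentiableAt) fun t => (hderiv t).deriv
  have hplane : ∀ t, γ t ⬝ᵥ magneticInvariant γ 0 = -1 := fun t => by
    rw [hconst 0 t, magneticInvariant, dotProduct_cross_sub_self, ← ip_eq_dotProduct, hsphere]
  refine ⟨hconst, hplane, fun hw => ?_⟩
  have h0 := hplane 0
  rw [magneticInvariant, hw, dotProduct_zero] at h0
  norm_num at h0

end
end

section
/- Let H be a real Hilbert space, let F : H → ℝ be continuously differentiable with gradient ∇F, and define the bounded vector field X(x) = −∇F(x)/√(1 + ‖∇F(x)‖²). Suppose u : [0, R] → H is differentiable and solves u'(r) = X(u(r)) for all r ∈ [0, R]. Then: (i) the function r ↦ F(u(r)) is nonincreasing on [0, R]; and (ii) for every r ∈ [0, R], ‖u(r) − u(0)‖² ≤ r · (F(u(0)) − F(u(r))). -/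
/-!
Write `φ = F ∘ u` and `v = u'`. The chain rule gives `φ' = ⟪∇F(u), v⟫ = -c ‖∇F(u)‖²` with
`c = (1 + ‖∇F(u)‖²)^(-1/2) ∈ (0, 1]`, whereas `‖v‖² = c² ‖∇F(u)‖²`; hence `‖v‖² ≤ -φ'`, so `φ`
decreases. For the displacement `w = u(r) - u(0)`, Cauchy–Schwarz and AM–GM give
`⟪w, v⟫ ≤ ‖w‖²/(2r) + (r/2) ‖v‖² ≤ ‖w‖²/(2r) - (r/2) φ'`, so
`s ↦ ⟪w, u(s)⟫ - s ‖w‖²/(2r) + (r/2) φ(s)` is nonincreasing on `[0, r]`; comparing its values at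
the endpoints yields `‖w‖²/2 ≤ (r/2) (φ(0) - φ(r))`.
-/

open Set

lemma antitoneOn_Icc_of_hasDerivAt_nonpos {f f' : ℝ → ℝ} {a b : ℝ}
    (hf : ∀ x ∈ Icc a b, HasDerivAt f (f' x) x) (hf' : ∀ x ∈ Icc a b, f' x ≤ 0) :
    AntitoneOn f (Icc a b) :=
  antitoneOn_of_hasDerivWithinAt_nonpos (convex_Icc a b)
    (fun x hx => (hf x hx).continuousAt.continuousWithinAt)
    (fun x hx => (hf x (interior_subset hx)).hasDerivWithinAt)
    (fun x hx => hf' x (interior_subset hx))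

lemma mul_le_sq_div_add_mul_sq {L : ℝ} (hL : 0 < L) (x y : ℝ) :
    x * y ≤ x ^ 2 / (2 * L) + L / 2 * y ^ 2 := by
  have key : x ^ 2 / (2 * L) + L / 2 * y ^ 2 - x * y = (x - L * y) ^ 2 / (2 * L) := by
    field_simp
    ring
  have : 0 ≤ (x - L * y) ^ 2 / (2 * L) := by positivity
  linarith

section InnerProductSpace

variable {E : Type*} [NormedAddCommGroup E] [InnerProductSpace ℝ E]

theorem sq_norm_sub_le_mul_sub_of_hasDerivAt {u v : ℝ → E} {φ φ' : ℝ → ℝ} {a b : ℝ}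
    (hab : a ≤ b) (hu : ∀ s ∈ Icc a b, HasDerivAt u (v s) s)
    (hφ : ∀ s ∈ Icc a b, HasDerivAt φ (φ' s) s) (hvφ : ∀ s ∈ Icc a b, ‖v s‖ ^ 2 ≤ -φ' s) :
    ‖u b - u a‖ ^ 2 ≤ (b - a) * (φ a - φ b) := by
  rcases hab.eq_or_lt with rfl | hlt
  · simp
  set w := u b - u a
  set L := b - a with hL_def
  have hL : 0 < L := sub_pos.mpr hlt
  have hψ : ∀ s ∈ Icc a b, HasDerivAt
      (fun s => inner ℝ w (u s) - ‖w‖ ^ 2 / (2 * L) * s + L / 2 * φ s)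
      (inner ℝ w (v s) - ‖w‖ ^ 2 / (2 * L) + L / 2 * φ' s) s := fun s hs => by
    simpa using (((hasDerivAt_const s w).inner ℝ (hu s hs)).fun_sub
      ((hasDerivAt_id s).const_mul (‖w‖ ^ 2 / (2 * L)))).fun_add ((hφ s hs).const_mul (L / 2))
  have hψ' : ∀ s ∈ Icc a b, inner ℝ w (v s) - ‖w‖ ^ 2 / (2 * L) + L / 2 * φ' s ≤ 0 :=
    fun s hs => by
      have := calc inner ℝ w (v s)
          ≤ ‖w‖ * ‖v s‖ := real_inner_le_norm w (v s)
        _ ≤ ‖w‖ ^ 2 / (2 * L) + L / 2 * ‖v s‖ ^ 2 := mul_le_sq_div_add_mul_sq hL _ _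
        _ ≤ ‖w‖ ^ 2 / (2 * L) + L / 2 * -φ' s := by gcongr; exact hvφ s hs
      linarith
  have hends := antitoneOn_Icc_of_hasDerivAt_nonpos hψ hψ'
    (left_mem_Icc.mpr hab) (right_mem_Icc.mpr hab) hab
  have hw : inner ℝ w (u b) - inner ℝ w (u a) = ‖w‖ ^ 2 := by
    rw [← inner_sub_right, real_inner_self_eq_norm_sq]
  have hhalf : ‖w‖ ^ 2 / (2 * L) * b - ‖w‖ ^ 2 / (2 * L) * a = ‖w‖ ^ 2 / 2 := by
    rw [← mul_sub, ← hL_def]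
    field_simp
  simp only at hends
  linarith

noncomputable def tamedNeg (g : E) : E := -(Real.sqrt (1 + ‖g‖ ^ 2))⁻¹ • g

lemma norm_sq_tamedNeg_le_neg_inner (g : E) : ‖tamedNeg g‖ ^ 2 ≤ -inner ℝ g (tamedNeg g) := by
  set c := (Real.sqrt (1 + ‖g‖ ^ 2))⁻¹
  have hc0 : 0 < c := inv_pos.mpr (Real.sqrt_pos.mpr (by positivity))
  have hc1 : c ≤ 1 := inv_le_one_of_one_le₀ (Real.one_le_sqrt.mpr (by nlinarith))
  rw [tamedNeg, norm_smul, inner_smul_right, real_inner_self_eq_norm_sq, norm_neg,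
    Real.norm_of_nonneg hc0.le]
  nlinarith [sq_nonneg ‖g‖]

lemma inner_tamedNeg_nonpos (g : E) : inner ℝ g (tamedNeg g) ≤ 0 := by
  linarith [norm_sq_tamedNeg_le_neg_inner g, sq_nonneg ‖tamedNeg g‖]

end InnerProductSpace

theorem HasGradientAt.comp_hasDerivAt {H : Type*} [NormedAddCommGroup H]
    [InnerProductSpace ℝ H] [CompleteSpace H] {F : H → ℝ} {g : H} {u : ℝ → H} {v : H} {t : ℝ}
    (hF : HasGradientAt F g (u t)) (hu : HasDerivAt u v t) :
    HasDerivAt (fun s => F (u s)) (inner ℝ g v) t :=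
  hF.hasFDerivAt.comp_hasDerivAt t hu

theorem tamed_gradient_flow_estimates_general
    {H : Type*} [NormedAddCommGroup H] [InnerProductSpace ℝ H] [CompleteSpace H]
    (F : H → ℝ) (hF : ContDiff ℝ 1 F)
    (R : ℝ) (u : ℝ → H)
    (hu : ∀ r ∈ Set.Icc (0 : ℝ) R,
      HasDerivAt u
        (-(Real.sqrt (1 + ‖gradient F (u r)‖ ^ 2))⁻¹ • gradient F (u r)) r) :
    AntitoneOn (fun r => F (u r)) (Set.Icc 0 R) ∧
    ∀ r ∈ Set.Icc (0 : ℝ) R, ‖u r - u 0‖ ^ 2 ≤ r * (F (u 0) - F (u r)) := by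
  have hu' : ∀ r ∈ Icc 0 R, HasDerivAt u (tamedNeg (gradient F (u r))) r := hu
  have hφ : ∀ r ∈ Icc 0 R, HasDerivAt (fun s => F (u s))
      (inner ℝ (gradient F (u r)) (tamedNeg (gradient F (u r)))) r := fun r hr =>
    ((hF.differentiable one_ne_zero (u r)).hasGradientAt).comp_hasDerivAt (hu' r hr)
  refine ⟨antitoneOn_Icc_of_hasDerivAt_nonpos hφ fun r _ => inner_tamedNeg_nonpos _,
    fun r hr => ?_⟩
  have hsub : Icc 0 r ⊆ Icc 0 R := Icc_subset_Icc_right hr.2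
  simpa using sq_norm_sub_le_mul_sub_of_hasDerivAt hr.1 (fun s hs => hu' s (hsub hs))
    (fun s hs => hφ s (hsub hs)) (fun s _ => norm_sq_tamedNeg_le_neg_inner _)

/-- Along a flow line of the tamed negative gradient vector field
`X(x) = -∇F(x)/√(1+‖∇F(x)‖²)` of a `C¹` function `F` on a Hilbert space,
the value of `F` is nonincreasing, and the displacement satisfies
`‖u(r) - u(0)‖² ≤ r (F(u(0)) - F(u(r)))`. -/
theorem tamed_gradient_flow_estimates
    {H : Type*} [NormedAddCommGroup H] [InnerProductSpace ℝ H] [CompleteSpace H]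
    (F : H → ℝ) (hF : ContDiff ℝ 1 F)
    (R : ℝ) (hR : 0 ≤ R) (u : ℝ → H)
    (hu : ∀ r ∈ Set.Icc (0 : ℝ) R,
      HasDerivAt u
        (-(Real.sqrt (1 + ‖gradient F (u r)‖ ^ 2))⁻¹ • gradient F (u r)) r) :
    AntitoneOn (fun r => F (u r)) (Set.Icc 0 R) ∧
    ∀ r ∈ Set.Icc (0 : ℝ) R, ‖u r - u 0‖ ^ 2 ≤ r * (F (u 0) - F (u r)) :=
  tamed_gradient_flow_estimates_general F hF R u hu
end
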